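/- arXiv:1211.3299 — 2 statements merged into one kernel-verified Lean document; each statement's English description precedes it below -/
import Mathlib

section
/- Consider a min-cost flow instance with cost vector c ∈ ℝ^E such that the min-cost feasible integer flow f* is unique, and let f̂ ≠ f* be any feasible integer flow. Then there exists an edge e ∈ E such that f*_e ∈ {0, u_e} and f̂_e ≠ f*_e. -/
open MeasureTheory

/-- A feasible integer flow: capacity constraints and budget (flow conservation)
constraints. -/
def IsFlow {V E : Type} [Fintype E] [DecidableEq V]
    (src tgt : E → V) (cap : E → ℕ) (bdg : V → ℤ) (f : E → ℤ) : Prop :=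
  (∀ e, 0 ≤ f e ∧ f e ≤ (cap e : ℤ)) ∧
  ∀ v, ((∑ e, if src e = v then f e else 0) - (∑ e, if tgt e = v then f e else 0)) = bdg v

/-- The cost `c · f` of an integer flow. -/
noncomputable def flowCost {E : Type} [Fintype E] (c : E → ℝ) (f : E → ℤ) : ℝ :=
  ∑ e, c e * (f e : ℝ)

/-- The event `E_ε^e`: there exist two different feasible integer flows `f*` and `f̂`
such that `f*` is optimal, `c·f̂ ≤ c·f* + ε`, `f*_e = 0` and `f̂_e > 0`. -/
def EventZero {V E : Type} [Fintype E] [DecidableEq V]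
    (src tgt : E → V) (cap : E → ℕ) (bdg : V → ℤ) (ε : ℝ) (e : E) (c : E → ℝ) : Prop :=
  ∃ fstar fhat : E → ℤ,
    IsFlow src tgt cap bdg fstar ∧ IsFlow src tgt cap bdg fhat ∧ fstar ≠ fhat ∧
    (∀ f, IsFlow src tgt cap bdg f → flowCost c fstar ≤ flowCost c f) ∧
    flowCost c fhat ≤ flowCost c fstar + ε ∧
    fstar e = 0 ∧ 0 < fhat e

/-- The event `E'_ε^e`: there exist two different feasible integer flows `f*` and `f̂`
such that `f*` is optimal, `c·f̂ ≤ c·f* + ε`, `f*_e = u_e` and `f̂_e < u_e`. -/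
def EventCap {V E : Type} [Fintype E] [DecidableEq V]
    (src tgt : E → V) (cap : E → ℕ) (bdg : V → ℤ) (ε : ℝ) (e : E) (c : E → ℝ) : Prop :=
  ∃ fstar fhat : E → ℤ,
    IsFlow src tgt cap bdg fstar ∧ IsFlow src tgt cap bdg fhat ∧ fstar ≠ fhat ∧
    (∀ f, IsFlow src tgt cap bdg f → flowCost c fstar ≤ flowCost c f) ∧
    flowCost c fhat ≤ flowCost c fstar + ε ∧
    fstar e = (cap e : ℤ) ∧ fhat e < (cap e : ℤ)

/-!
Suppose every edge on which `f̂` and `f*` differ has `0 < f*_e < u_e`. Then `d = f̂ - f*` is a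
nonzero integer circulation, and `f*` has slack at least one in both directions on its support.
Reverse the edges where `d < 0`, so that `d ≥ 0`. Every support edge entering a vertex is followed
by a support edge leaving it, and the periodic points of such a successor map form a nonempty
union of cycles. Undoing the reversal gives a nonzero circulation `χ` with `χ_e ∈ {0, sign d_e}`.
Then `f* + χ` and `f* - χ` are both feasible flows different from `f*`, and their costs average
to `c·f*`, which contradicts uniqueness.
-/

open Finset Function Set

theorem Function.exists_iterate_mem_periodicPts {α : Type*} [Finite α] (f : α → α) (x : α) :
    ∃ m, f^[m] x ∈ periodicPts f := by
  obtain ⟨m, n, hmn, hrep⟩ : ∃ m n, m < n ∧ f^[m] x = f^[n] x := by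
    obtain ⟨m, n, hne, hrep⟩ := Finite.exists_ne_map_eq_of_infinite (f^[·] x)
    rcases hne.lt_or_gt with h | h
    exacts [⟨m, n, h, hrep⟩, ⟨n, m, h, hrep.symm⟩]
  refine ⟨m, mk_mem_periodicPts (Nat.sub_pos_of_lt hmn) ?_⟩
  rw [IsPeriodicPt, IsFixedPt, ← iterate_add_apply, Nat.sub_add_cancel hmn.le, hrep]

theorem Set.MapsTo.exists_nonempty_bijOn_subset {α : Type*} [Finite α] {f : α → α}
    {t : Set α} (hf : MapsTo f t t) (ht : t.Nonempty) :
    ∃ s ⊆ t, s.Nonempty ∧ BijOn f s s := by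
  obtain ⟨x, hx⟩ := ht
  obtain ⟨m, hm⟩ := exists_iterate_mem_periodicPts f x
  have hper := bijOn_periodicPts f
  refine ⟨t ∩ periodicPts f, inter_subset_left, ⟨_, hf.iterate m hx, hm⟩,
    hf.inter_inter hper.mapsTo, hper.injOn.mono inter_subset_right, fun y ⟨hyt, hyp⟩ => ?_⟩
  obtain ⟨k, hk, hy⟩ := mem_periodicPts.1 hyp
  refine ⟨f^[k - 1] y, ⟨hf.iterate _ hyt, mk_mem_periodicPts hk (hy.apply_iterate _)⟩, ?_⟩
  rw [← iterate_succ_apply' f, Nat.succ_eq_add_one, Nat.sub_add_cancel hk]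
  exact hy

section Divergence

variable {V E M : Type*} [Fintype E] [DecidableEq V] [AddCommGroup M] (src tgt : E → V)

def divergence (f : E → M) (v : V) : M :=
  (∑ e, if src e = v then f e else 0) - ∑ e, if tgt e = v then f e else 0

variable {src tgt}

theorem divergence_eq_sum (f : E → M) (v : V) :
    divergence src tgt f v =
      ∑ e, ((if src e = v then f e else 0) - if tgt e = v then f e else 0) :=
  (sum_sub_distrib _ _).symm

theorem divergence_add (f g : E → M) (v : V) :
    divergence src tgt (f + g) v = divergence src tgt f v + divergence src tgt g v := by
  simp only [divergence_eq_sum, ← sum_add_distrib]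
  refine sum_congr rfl fun e _ => ?_
  simp only [Pi.add_apply]
  split_ifs <;> abel

theorem divergence_neg (f : E → M) (v : V) :
    divergence src tgt (-f) v = -divergence src tgt f v := by
  simp only [divergence_eq_sum, ← sum_neg_distrib]
  refine sum_congr rfl fun e _ => ?_
  simp only [Pi.neg_apply]
  split_ifs <;> abel

theorem divergence_sub (f g : E → M) (v : V) :
    divergence src tgt (f - g) v = divergence src tgt f v - divergence src tgt g v := by
  rw [sub_eq_add_neg, divergence_add, divergence_neg, sub_eq_add_neg]

theorem divergence_reverse (r : E → Prop) [DecidablePred r] (f : E → M) (v : V) :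
    divergence (fun e => if r e then tgt e else src e) (fun e => if r e then src e else tgt e)
      (fun e => if r e then -f e else f e) v = divergence src tgt f v := by
  simp only [divergence_eq_sum]
  refine sum_congr rfl fun e _ => ?_
  by_cases he : r e
  · simp only [he, if_true]
    split_ifs <;> abel
  · simp only [he, if_false]

end Divergence

section Circulation

variable {V E : Type*} [Fintype E] [DecidableEq V] {src tgt : E → V}

theorem divergence_indicator_eq_zero_of_bijOn [DecidableEq E] {s : Finset E} {f : E → E}
    (hf : BijOn f s s) (hlink : ∀ e ∈ s, src (f e) = tgt e) (v : V) :
    divergence src tgt (fun e => if e ∈ s then (1 : ℤ) else 0) v = 0 := by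
  have hsum : ∀ p : E → Prop, [DecidablePred p] →
      (∑ e, if p e then (if e ∈ s then (1 : ℤ) else 0) else 0) =
        ∑ e ∈ s, if p e then 1 else 0 := by
    intro p _
    rw [← sum_filter, ← sum_filter, ← sum_filter, filter_filter]
    exact sum_congr (by ext; simp [and_comm]) fun _ _ => rfl
  rw [divergence, hsum, hsum, sub_eq_zero]
  exact (sum_nbij f hf.mapsTo hf.injOn hf.surjOn fun e he => by rw [hlink e he]).symm

variable {M : Type*} [AddCommGroup M] [LinearOrder M] [IsOrderedAddMonoid M]

theorem exists_out_edge_of_nonneg_circulation {d : E → M} (hd : ∀ e, 0 ≤ d e)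
    (hdiv : ∀ v, divergence src tgt d v = 0) {e : E} (he : 0 < d e) :
    ∃ e', src e' = tgt e ∧ 0 < d e' := by
  have hin : 0 < ∑ e', if tgt e' = tgt e then d e' else 0 :=
    sum_pos' (fun e' _ => by split_ifs <;> simp [hd]) ⟨e, mem_univ _, by simpa using he⟩
  have hout : ∑ _e' : E, (0 : M) < ∑ e', if src e' = tgt e then d e' else 0 := by
    rw [sum_const_zero, sub_eq_zero.1 (hdiv (tgt e))]
    exact hin
  obtain ⟨e', -, he'⟩ := exists_lt_of_sum_lt hout
  split_ifs at he' with h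
  exacts [⟨e', h, he'⟩, absurd he' (lt_irrefl 0)]

theorem exists_indicator_circulation_of_nonneg_circulation [DecidableEq E] {d : E → M}
    (hd : ∀ e, 0 ≤ d e) (hdiv : ∀ v, divergence src tgt d v = 0) (hne : d ≠ 0) :
    ∃ s : Finset E, s.Nonempty ∧ (∀ e ∈ s, 0 < d e) ∧
      ∀ v, divergence src tgt (fun e => if e ∈ s then (1 : ℤ) else 0) v = 0 := by
  choose! next hnext using fun e (he : 0 < d e) =>
    exists_out_edge_of_nonneg_circulation hd hdiv he
  obtain ⟨e₀, he₀⟩ : ∃ e, 0 < d e := by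
    obtain ⟨e, he⟩ := Function.ne_iff.1 hne
    exact ⟨e, (hd e).lt_of_ne' he⟩
  obtain ⟨s, hsd, hsne, hbij⟩ := MapsTo.exists_nonempty_bijOn_subset
    (t := {e | 0 < d e}) (fun e he => (hnext e he).2) ⟨e₀, he₀⟩
  classical
  refine ⟨s.toFinset, by simpa using hsne, fun e he => hsd (mem_toFinset.1 he),
    divergence_indicator_eq_zero_of_bijOn (f := next) (by rwa [coe_toFinset])
      fun e he => (hnext e (hsd (mem_toFinset.1 he))).1⟩

theorem exists_conformal_unit_circulation {d : E → ℤ}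
    (hdiv : ∀ v, divergence src tgt d v = 0) (hne : d ≠ 0) :
    ∃ χ : E → ℤ, χ ≠ 0 ∧ (∀ v, divergence src tgt χ v = 0) ∧
      ∀ e, χ e = 0 ∨ χ e = (d e).sign := by
  classical
  obtain ⟨s, ⟨e₀, he₀⟩, hpos, hs⟩ := exists_indicator_circulation_of_nonneg_circulation
    (src := fun e => if d e < 0 then tgt e else src e)
    (tgt := fun e => if d e < 0 then src e else tgt e)
    (d := fun e => if d e < 0 then -d e else d e)
    (fun e => by split_ifs <;> omega) (fun v => by rw [divergence_reverse, hdiv])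
    (by
      obtain ⟨e, he⟩ := Function.ne_iff.1 hne
      exact Function.ne_iff.2 ⟨e, by simp only [Pi.zero_apply] at he ⊢; split_ifs <;> omega⟩)
  have hsd : ∀ e ∈ s, d e ≠ 0 := fun e he => by
    have := hpos e he
    split_ifs at this <;> omega
  refine ⟨fun e => if e ∈ s then (d e).sign else 0, fun h => ?_, fun v => ?_, fun e => ?_⟩
  · simpa [he₀, hsd e₀ he₀] using congrFun h e₀
  · rw [← divergence_reverse (fun e => d e < 0)]
    convert hs v using 2
    funext e
    by_cases he : e ∈ s
    · rcases (hsd e he).lt_or_gt with hneg | hpos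
      · simp [he, hneg, Int.sign_eq_neg_one_of_neg hneg]
      · simp [he, hpos.not_gt, Int.sign_eq_one_of_pos hpos]
    · simp [he]
  · dsimp only
    split_ifs <;> simp

end Circulation

theorem Int.abs_sign_le_one (a : ℤ) : |a.sign| ≤ 1 := by
  rcases Int.sign_trichotomy a with h | h | h <;> simp [h]

section Flow

variable {V E : Type} [Fintype E] [DecidableEq V] {src tgt : E → V} {cap : E → ℕ}
  {bdg : V → ℤ}

theorem IsFlow.add_circulation_of_slack {f χ : E → ℤ} (hf : IsFlow src tgt cap bdg f)
    (hχ : ∀ v, divergence src tgt χ v = 0)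
    (hslack : ∀ e, χ e ≠ 0 → 0 < f e ∧ f e < cap e) (hunit : ∀ e, |χ e| ≤ 1) :
    IsFlow src tgt cap bdg (f + χ) := by
  refine ⟨fun e => ?_, fun v => show divergence src tgt (f + χ) v = bdg v by
    rw [divergence_add, hχ, add_zero]; exact hf.2 v⟩
  have hfe := hf.1 e
  have hχe := abs_le.1 (hunit e)
  by_cases h : χ e = 0
  · simpa [h] using hfe
  · have := hslack e h
    simp only [Pi.add_apply]
    omega

theorem flowCost_add (c : E → ℝ) (f g : E → ℤ) :
    flowCost c (f + g) = flowCost c f + flowCost c g := by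
  simp only [flowCost, Pi.add_apply, Int.cast_add, mul_add, sum_add_distrib]

theorem flowCost_neg (c : E → ℝ) (f : E → ℤ) : flowCost c (-f) = -flowCost c f := by
  simp only [flowCost, Pi.neg_apply, Int.cast_neg, mul_neg, sum_neg_distrib]

end Flow

theorem exists_tight_edge_general
    {V E : Type} [Fintype E] [DecidableEq V]
    (src tgt : E → V) (cap : E → ℕ) (bdg : V → ℤ)
    (c : E → ℝ)
    (fstar : E → ℤ)
    (hfeas : IsFlow src tgt cap bdg fstar)
    (hunique : ∀ f, IsFlow src tgt cap bdg f → f ≠ fstar → flowCost c fstar < flowCost c f)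
    (fhat : E → ℤ) (hfhat : IsFlow src tgt cap bdg fhat) (hne : fhat ≠ fstar) :
    ∃ e : E, (fstar e = 0 ∨ fstar e = (cap e : ℤ)) ∧ fhat e ≠ fstar e := by
  by_contra! htight
  have hdiv : ∀ v, divergence src tgt (fhat - fstar) v = 0 := fun v => by
    rw [divergence_sub, sub_eq_zero]; exact (hfhat.2 v).trans (hfeas.2 v).symm
  obtain ⟨χ, hχ0, hχ, hsign⟩ := exists_conformal_unit_circulation hdiv (sub_ne_zero.2 hne)
  have hslack : ∀ e, χ e ≠ 0 → 0 < fstar e ∧ fstar e < cap e := fun e hχe => by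
    have hd : fhat e ≠ fstar e := fun hd => hχe <| by simpa [hd] using hsign e
    have := hfeas.1 e
    have := mt (htight e) hd
    omega
  have hunit : ∀ e, |χ e| ≤ 1 := fun e => by
    rcases hsign e with h | h <;> rw [h]
    exacts [by simp, Int.abs_sign_le_one _]
  have hχneg : ∀ v, divergence src tgt (-χ) v = 0 := fun v => by
    rw [divergence_neg, hχ v, neg_zero]
  have hplus := hunique _ (hfeas.add_circulation_of_slack hχ hslack hunit) (by simpa using hχ0)
  have hminus := hunique _ (hfeas.add_circulation_of_slack hχneg (by simpa using hslack)
    (by simpa using hunit)) (by simpa using hχ0)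
  rw [flowCost_add] at hplus hminus
  rw [flowCost_neg] at hminus
  linarith

/-- If the min-cost flow `f*` is unique, then any feasible integer flow `f̂ ≠ f*`
differs from `f*` on some edge `e` with `f*_e ∈ {0, u_e}`. -/
theorem exists_tight_edge
    {V E : Type} [Fintype V] [Fintype E] [DecidableEq V]
    (src tgt : E → V) (cap : E → ℕ) (bdg : V → ℤ)
    (c : E → ℝ)
    (fstar : E → ℤ)
    (hfeas : IsFlow src tgt cap bdg fstar)
    (hunique : ∀ f, IsFlow src tgt cap bdg f → f ≠ fstar → flowCost c fstar < flowCost c f)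
    (fhat : E → ℤ) (hfhat : IsFlow src tgt cap bdg fhat) (hne : fhat ≠ fstar) :
    ∃ e : E, (fstar e = 0 ∨ fstar e = (cap e : ℤ)) ∧ fhat e ≠ fstar e :=
  exists_tight_edge_general src tgt cap bdg c fstar hfeas hunique fhat hfhat hne
end

section
/- Consider a min-cost flow instance whose edge costs c_e ∈ [0,1] are independent random variables, each having a probability density function bounded from above by φ. Then for every ε ≥ 0 and every edge e ∈ E, the probability of the event E_ε^e is at most εφ, and the probability of the event E'_ε^e is at most εφ. -/
open MeasureTheory

/-!
Fix all costs but `c_e` and view the event as a set of values `t` of `c_e`; by independence it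
suffices to show that this set has diameter at most `ε`, since a density bounded by `φ` gives
such a set probability at most `εφ`. If `f*` is optimal for `c_e = s` and `f̂` is `ε`-close to
optimal for `c_e = s'`, then moving `c_e` from `s` to `s'` changes the cost gap `c·f̂ - c·f*` by
`(s' - s)(f̂_e - f*_e)`, so `(s' - s)(f̂_e - f*_e) ≤ ε`. For `E_ε^e` take `s < s'` and the optimum
`f*` at `s` (so `f̂_e - f*_e ≥ 1`); for `E'_ε^e` take `s > s'` (so `f̂_e - f*_e ≤ -1`).
-/

open Function ENNReal Metric

lemma flowCost_update {E : Type} [Fintype E] [DecidableEq E]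
    (c : E → ℝ) (e : E) (t : ℝ) (f : E → ℤ) :
    flowCost (update c e t) f = flowCost c f + (t - c e) * f e := by
  simp only [flowCost]
  rw [← Finset.add_sum_erase _ _ (Finset.mem_univ e),
    ← Finset.add_sum_erase _ _ (Finset.mem_univ e),
    Finset.sum_congr rfl fun e' he' => by rw [update_of_ne (Finset.ne_of_mem_erase he')],
    update_self]
  ring

@[fun_prop]
lemma measurable_flowCost {E : Type} [Fintype E] (f : E → ℤ) :
    Measurable fun c : E → ℝ => flowCost c f := by
  unfold flowCost
  fun_prop

lemma mul_sub_le_of_flowCost_le {E : Type} [Fintype E] [DecidableEq E] {c : E → ℝ} {e : E}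
    {s s' ε : ℝ} {p q : E → ℤ}
    (hp : flowCost (update c e s) p ≤ flowCost (update c e s) q)
    (hq : flowCost (update c e s') q ≤ flowCost (update c e s') p + ε) :
    (s' - s) * (q e - p e) ≤ ε := by
  simp only [flowCost_update] at hp hq
  linarith

section Events

variable {V E : Type} [Fintype E] [DecidableEq V] [DecidableEq E]
  {src tgt : E → V} {cap : E → ℕ} {bdg : V → ℤ} {ε : ℝ} {e : E} {c : E → ℝ} {t₁ t₂ : ℝ}

lemma EventZero.update_sub_le (h₁ : EventZero src tgt cap bdg ε e (update c e t₁))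
    (h₂ : EventZero src tgt cap bdg ε e (update c e t₂)) (ht : t₁ ≤ t₂) : t₂ - t₁ ≤ ε := by
  obtain ⟨f₁, -, hf₁, -, -, hopt₁, -, hf₁e, -⟩ := h₁
  obtain ⟨f₂, g₂, -, hg₂, -, hopt₂, hcost₂, -, hg₂e⟩ := h₂
  have hgap := mul_sub_le_of_flowCost_le (hopt₁ g₂ hg₂)
    (hcost₂.trans (add_le_add_left (hopt₂ f₁ hf₁) ε))
  have hjump : (1 : ℝ) ≤ g₂ e - f₁ e := by
    rw [hf₁e, Int.cast_zero, sub_zero]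
    exact_mod_cast hg₂e
  nlinarith

lemma EventCap.update_sub_le (h₁ : EventCap src tgt cap bdg ε e (update c e t₁))
    (h₂ : EventCap src tgt cap bdg ε e (update c e t₂)) (ht : t₁ ≤ t₂) : t₂ - t₁ ≤ ε := by
  obtain ⟨f₁, g₁, -, hg₁, -, hopt₁, hcost₁, -, hg₁e⟩ := h₁
  obtain ⟨f₂, -, hf₂, -, -, hopt₂, -, hf₂e, -⟩ := h₂
  have hgap := mul_sub_le_of_flowCost_le (hopt₂ g₁ hg₁)
    (hcost₁.trans (add_le_add_left (hopt₁ f₂ hf₂) ε))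
  have hjump : (g₁ e : ℝ) - f₂ e ≤ -1 := by
    have : (g₁ e : ℝ) + 1 ≤ cap e := by exact_mod_cast Int.add_one_le_of_lt hg₁e
    rw [hf₂e, Int.cast_natCast]
    linarith
  nlinarith

end Events

lemma ediam_le_ofReal_of_forall_sub_le {s : Set ℝ} {ε : ℝ}
    (h : ∀ x ∈ s, ∀ y ∈ s, x ≤ y → y - x ≤ ε) : ediam s ≤ ENNReal.ofReal ε :=
  ediam_le fun x hx y hy => by
    rw [edist_dist, Real.dist_eq]
    refine ofReal_le_ofReal ?_
    rcases le_total x y with hxy | hxy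
    · rw [abs_sub_comm, abs_of_nonneg (sub_nonneg.2 hxy)]
      exact h x hx y hy hxy
    · rw [abs_of_nonneg (sub_nonneg.2 hxy)]
      exact h y hy x hx hxy

lemma withDensity_le_mul_ediam {g : ℝ → ℝ≥0∞} {C : ℝ≥0∞} (hg : ∀ x, g x ≤ C) (s : Set ℝ) :
    volume.withDensity g s ≤ C * ediam s :=
  calc volume.withDensity g s = ∫⁻ x in s, g x := withDensity_apply' g s
    _ ≤ ∫⁻ _ in s, C := lintegral_mono hg
    _ = C * volume s := setLIntegral_const s C
    _ ≤ C * ediam s := by gcongr; exact Real.volume_le_diam s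

theorem MeasureTheory.Measure.pi_le_of_forall_update_le {ι : Type*} [Fintype ι] [DecidableEq ι]
    {X : ι → Type*} [∀ i, MeasurableSpace (X i)] (μ : ∀ i, Measure (X i))
    [∀ i, IsProbabilityMeasure (μ i)] {S : Set (∀ i, X i)} (hS : MeasurableSet S) (i : ι)
    {C : ℝ≥0∞} (hC : ∀ x, μ i (update x i ⁻¹' S) ≤ C) : Measure.pi μ S ≤ C := by
  rcases S.eq_empty_or_nonempty with rfl | ⟨x₀, -⟩
  · simp
  have hfiber : ∀ x, ∫⁻ t, S.indicator 1 (update x i t) ∂μ i = μ i (update x i ⁻¹' S) :=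
    fun x => by
      simp_rw [← Set.indicator_comp_right]
      exact lintegral_indicator_one (hS.preimage (measurable_update x))
  calc Measure.pi μ S = ∫⁻ x, S.indicator 1 x ∂Measure.pi μ := (lintegral_indicator_one hS).symm
    _ = (∫⋯∫⁻_Finset.univ.erase i, fun x => μ i (update x i ⁻¹' S) ∂μ) x₀ := by
      rw [lintegral_eq_lmarginal_univ x₀,
        lmarginal_erase' _ (measurable_one.indicator hS) (Finset.mem_univ i)]
      simp_rw [hfiber]
    _ ≤ (∫⋯∫⁻_Finset.univ.erase i, fun _ => C ∂μ) x₀ := lmarginal_mono hC x₀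
    _ = C := by simp [lmarginal]

theorem event_prob_le_general
    {V E : Type} [Fintype E] [DecidableEq V]
    (src tgt : E → V) (cap : E → ℕ) (bdg : V → ℤ)
    (φ ε : ℝ) (hε : 0 ≤ ε)
    (g : E → ℝ → ENNReal)
    (hgbound : ∀ e x, g e x ≤ ENNReal.ofReal φ)
    (hgprob : ∀ e, IsProbabilityMeasure ((volume : Measure ℝ).withDensity (g e)))
    (e : E) :
    Measure.pi (fun e' : E => (volume : Measure ℝ).withDensity (g e'))
        {c : E → ℝ | EventZero src tgt cap bdg ε e c} ≤ ENNReal.ofReal (ε * φ) ∧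
    Measure.pi (fun e' : E => (volume : Measure ℝ).withDensity (g e'))
        {c : E → ℝ | EventCap src tgt cap bdg ε e c} ≤ ENNReal.ofReal (ε * φ) := by
  classical
  have hfiber {P : (E → ℝ) → Prop} (hP : MeasurableSet {c | P c})
      (hdiam : ∀ c, ediam {t | P (update c e t)} ≤ ENNReal.ofReal ε) :
      Measure.pi (fun e' => volume.withDensity (g e')) {c | P c} ≤ ENNReal.ofReal (ε * φ) := by
    refine Measure.pi_le_of_forall_update_le _ hP e fun c => ?_
    calc _ ≤ ENNReal.ofReal φ * ediam {t | P (update c e t)} :=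
          withDensity_le_mul_ediam (hgbound e) _
      _ ≤ ENNReal.ofReal φ * ENNReal.ofReal ε := by gcongr; exact hdiam c
      _ = ENNReal.ofReal (ε * φ) := by rw [ofReal_mul hε, mul_comm]
  have hmeas : MeasurableSet {c | EventZero src tgt cap bdg ε e c} ∧
      MeasurableSet {c | EventCap src tgt cap bdg ε e c} := by
    simp only [EventZero, EventCap, measurableSet_setOfPred]
    constructor <;> fun_prop
  exact ⟨hfiber hmeas.1 fun c => ediam_le_ofReal_of_forall_sub_le fun _ h₁ _ h₂ =>
      EventZero.update_sub_le h₁ h₂,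
    hfiber hmeas.2 fun c => ediam_le_ofReal_of_forall_sub_le fun _ h₁ _ h₂ =>
      EventCap.update_sub_le h₁ h₂⟩

/-- If the edge costs are independent random variables with values in `[0,1]` whose
densities are bounded by `φ`, then for every `ε ≥ 0` and every edge `e` the
probability of each of the events `E_ε^e` and `E'_ε^e` is at most `ε φ`. -/
theorem event_prob_le
    {V E : Type} [Fintype V] [Fintype E] [DecidableEq V]
    (src tgt : E → V) (cap : E → ℕ) (bdg : V → ℤ)
    (φ ε : ℝ) (hε : 0 ≤ ε)
    (g : E → ℝ → ENNReal)
    (hgmeas : ∀ e, Measurable (g e))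
    (hgbound : ∀ e x, g e x ≤ ENNReal.ofReal φ)
    (hgsupp : ∀ e x, x ∉ Set.Icc (0 : ℝ) 1 → g e x = 0)
    (hgprob : ∀ e, IsProbabilityMeasure ((volume : Measure ℝ).withDensity (g e)))
    (e : E) :
    Measure.pi (fun e' : E => (volume : Measure ℝ).withDensity (g e'))
        {c : E → ℝ | EventZero src tgt cap bdg ε e c} ≤ ENNReal.ofReal (ε * φ) ∧
    Measure.pi (fun e' : E => (volume : Measure ℝ).withDensity (g e'))
        {c : E → ℝ | EventCap src tgt cap bdg ε e c} ≤ ENNReal.ofReal (ε * φ) :=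
  event_prob_le_general src tgt cap bdg φ ε hε g hgbound hgprob e
end
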